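/- arXiv:2508.05984 — 2 statements merged into one kernel-verified Lean document; each statement's English description precedes it below -/
import Mathlib

section
/- Let p be a seminorm on ℝ^d with kernel E = {x ∈ ℝ^d : p(x) = 0}, and let H : ℝ^d → ℝ^d and β ∈ [0,1) satisfy p(H(x) − H(y)) ≤ β · p(x − y) for all x, y ∈ ℝ^d. Then there exists a semi-norm fixed point Q* ∈ ℝ^d, i.e., a vector Q* with p(H(Q*) − Q*) = 0 (equivalently, H(Q*) − Q* ∈ E). -/
/-!
With the pseudometric `p (x - y)`, a finite-dimensional space is complete (its separation
quotient is a finite-dimensional normed space), and a `β`-contraction descends to a genuine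
contraction of the separation quotient. Banach's fixed point theorem gives a fixed class there,
and any representative `Q*` of it satisfies `p (H Q* - Q*) = 0`.
-/

open NNReal SeparationQuotient

theorem FiniteDimensional.completeSpace_of_seminormed (𝕜 : Type*) {E : Type*}
    [NontriviallyNormedField 𝕜] [CompleteSpace 𝕜] [SeminormedAddCommGroup E] [NormedSpace 𝕜 E]
    [FiniteDimensional 𝕜 E] : CompleteSpace E := by
  have : FiniteDimensional 𝕜 (SeparationQuotient E) :=
    Module.Finite.of_surjective (mkCLM 𝕜 E).toLinearMap surjective_mk
  exact completeSpace_iff.1 (FiniteDimensional.complete 𝕜 _)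

theorem LipschitzWith.exists_inseparable_apply_self {α : Type*} [PseudoMetricSpace α]
    [CompleteSpace α] [Nonempty α] {K : ℝ≥0} {f : α → α} (hK : K < 1) (hf : LipschitzWith K f) :
    ∃ x, Inseparable (f x) x := by
  let g : SeparationQuotient α → SeparationQuotient α :=
    lift (mk ∘ f) fun x y hxy => mk_eq_mk.2 (hxy.map hf.continuous)
  have hg_mk (x : α) : g (mk x) = mk (f x) := rfl
  have hg_contr : ContractingWith K g :=
    ⟨hK, surjective_mk.forall₂.2 fun x y => by simpa only [hg_mk, edist_mk] using hf x y⟩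
  obtain ⟨x₀⟩ := ‹Nonempty α›
  obtain ⟨y, hy, -⟩ := hg_contr.exists_fixedPoint (mk x₀) (edist_ne_top _ _)
  obtain ⟨x, rfl⟩ := surjective_mk y
  exact ⟨x, mk_eq_mk.1 hy⟩

theorem Seminorm.exists_apply_sub_self_eq_zero_of_contraction {V : Type*} [AddCommGroup V]
    [Module ℝ V] [FiniteDimensional ℝ V] (p : Seminorm ℝ V) {β : ℝ} (hβ : β ∈ Set.Ico 0 1)
    {f : V → V} (hf : ∀ x y, p (f x - f y) ≤ β * p (x - y)) : ∃ x, p (f x - x) = 0 := by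
  let := p.toSeminormedAddCommGroup
  let : NormedSpace ℝ V := ⟨fun c x => (map_smul_eq_mul p c x).le⟩
  have := FiniteDimensional.completeSpace_of_seminormed ℝ (E := V)
  have hlip : LipschitzWith ⟨β, hβ.1⟩ f := LipschitzWith.of_dist_le_mul fun x y => by
    rw [dist_eq_norm, dist_eq_norm]
    exact hf x y
  obtain ⟨x, hx⟩ := hlip.exists_inseparable_apply_self hβ.2
  exact ⟨x, by rwa [Metric.inseparable_iff, dist_eq_norm] at hx⟩

theorem seminorm_contraction_exists_fixed_point_general
    (d : ℕ)
    (p : (Fin d → ℝ) → ℝ)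
    (hp_homog : ∀ (c : ℝ) (x : Fin d → ℝ), p (c • x) = |c| * p x)
    (hp_subadd : ∀ x y : Fin d → ℝ, p (x + y) ≤ p x + p y)
    (H : (Fin d → ℝ) → (Fin d → ℝ))
    (β : ℝ) (hβ : β ∈ Set.Ico (0 : ℝ) 1)
    (hcontr : ∀ x y : Fin d → ℝ, p (H x - H y) ≤ β * p (x - y)) :
    ∃ Qstar : Fin d → ℝ, p (H Qstar - Qstar) = 0 :=
  (Seminorm.of p hp_subadd hp_homog).exists_apply_sub_self_eq_zero_of_contraction hβ hcontr

/-- A seminorm contraction on ℝ^d admits a semi-norm fixed point: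
a vector `Q*` with `p (H Q* - Q*) = 0`. -/
theorem seminorm_contraction_exists_fixed_point
    (d : ℕ) (hd : 0 < d)
    (p : (Fin d → ℝ) → ℝ)
    (hp_nonneg : ∀ x, 0 ≤ p x)
    (hp_homog : ∀ (c : ℝ) (x : Fin d → ℝ), p (c • x) = |c| * p x)
    (hp_subadd : ∀ x y : Fin d → ℝ, p (x + y) ≤ p x + p y)
    (H : (Fin d → ℝ) → (Fin d → ℝ))
    (β : ℝ) (hβ : β ∈ Set.Ico (0 : ℝ) 1)
    (hcontr : ∀ x y : Fin d → ℝ, p (H x - H y) ≤ β * p (x - y)) :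
    ∃ Qstar : Fin d → ℝ, p (H Qstar - Qstar) = 0 :=
  seminorm_contraction_exists_fixed_point_general d p hp_homog hp_subadd H β hβ hcontr
end

section
/- Let p be a seminorm on ℝ^d with kernel E = {x : p(x) = 0}, and let ν be a monotone norm on ℝ^d such that p(x) ≤ ν(x) for all x and p(x) = min_{e ∈ E} ν(x − e) with the minimum attained. Let C_A, C_b ≥ 0 and C_* > 0 be constants, let Q, Q* ∈ ℝ^d, let b_Q, b_* ∈ ℝ^d, and let A_Q, A_* be d×d real matrices such that: (i) A_Q·e = e and A_*·e = e for every e ∈ E; (ii) if p(Q − Q*) < C_* then b_Q = b_* and A_Q = A_*; (iii) ν(b_Q − b_*) ≤ 2C_b and ν((A_Q − A_*)·x) ≤ 2C_A·ν(x) for all x ∈ ℝ^d; and (iv) the vector ξ := (b_Q − b_*) + (A_Q − A_*)·Q satisfies the coordinatewise sandwich 0 ≤ ξ ≤ (b_Q − b_*) + (A_Q − A_*)·(Q − Q*). Then p(ξ) ≤ 2·(C_A/C_* + C_b/C_*²)·p(Q − Q*)². -/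
/-!
Near the fixed point (`p (Q - Q*) < C*`) the dichotomy makes `ξ` vanish. Far from it, the
sandwich and monotonicity of `ν` give `p ξ ≤ ν ξ ≤ ν (b_Q - b_*) + ν ((A_Q - A_*) (Q - Q*))`.
Since `A_Q - A_*` kills the kernel of `p`, `Q - Q*` may be replaced by a `ν`-minimal
representative of its class modulo that kernel, so the second term is at most
`2 C_A p (Q - Q*)`. The resulting affine bound in `t = p (Q - Q*)` is dominated by the quadratic
one once `t ≥ C*`.
-/

theorem le_mul_of_map_ker_eq_zero {E F : Type*} [AddCommGroup E] [AddCommGroup F]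
    (p ν : E → ℝ) (μ : F → ℝ) (f : E →+ F) (K : ℝ)
    (hattain : ∀ x, ∃ e, p e = 0 ∧ ν (x - e) = p x)
    (hf_ker : ∀ e, p e = 0 → f e = 0)
    (hf_bound : ∀ x, μ (f x) ≤ K * ν x) (x : E) :
    μ (f x) ≤ K * p x := by
  obtain ⟨e, hpe, hνe⟩ := hattain x
  calc μ (f x) = μ (f (x - e)) := by rw [map_sub, hf_ker e hpe, sub_zero]
    _ ≤ K * p x := hνe ▸ hf_bound (x - e)

theorem add_mul_le_div_add_div_mul_sq {a b c t : ℝ} (ha : 0 ≤ a) (hb : 0 ≤ b) (hc : 0 < c)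
    (hct : c ≤ t) :
    b + a * t ≤ (a / c + b / c ^ 2) * t ^ 2 := by
  have ht : 0 ≤ t := hc.le.trans hct
  have hb_le : b ≤ b / c ^ 2 * t ^ 2 := by
    rw [div_mul_eq_mul_div, le_div_iff₀ (by positivity)]
    exact mul_le_mul_of_nonneg_left (pow_le_pow_left₀ hc.le hct 2) hb
  have hat_le : a * t ≤ a / c * t ^ 2 := by
    rw [div_mul_eq_mul_div, le_div_iff₀ hc, sq, ← mul_assoc]
    exact mul_le_mul_of_nonneg_left hct (mul_nonneg ha ht)
  linarith

theorem nonlinear_perturbation_quadratic_bound_general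
    (d : ℕ)
    (p ν : (Fin d → ℝ) → ℝ)
    (hp_homog : ∀ (c : ℝ) (x : Fin d → ℝ), p (c • x) = |c| * p x)
    (hν_subadd : ∀ x y : Fin d → ℝ, ν (x + y) ≤ ν x + ν y)
    (hν_mono : ∀ x y : Fin d → ℝ, 0 ≤ x → x ≤ y → ν x ≤ ν y)
    (hple : ∀ x : Fin d → ℝ, p x ≤ ν x)
    (hattain : ∀ x : Fin d → ℝ, ∃ e : Fin d → ℝ, p e = 0 ∧ ν (x - e) = p x)
    (CA Cb Cstar : ℝ) (hCA : 0 ≤ CA) (hCb : 0 ≤ Cb) (hCstar : 0 < Cstar)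
    (Q Qstar bQ bstar : Fin d → ℝ)
    (AQ Astar : Matrix (Fin d) (Fin d) ℝ)
    (hAQe : ∀ e : Fin d → ℝ, p e = 0 → AQ.mulVec e = e)
    (hAse : ∀ e : Fin d → ℝ, p e = 0 → Astar.mulVec e = e)
    (hdich : p (Q - Qstar) < Cstar → bQ = bstar ∧ AQ = Astar)
    (hb_bound : ν (bQ - bstar) ≤ 2 * Cb)
    (hA_bound : ∀ x : Fin d → ℝ, ν ((AQ - Astar).mulVec x) ≤ 2 * CA * ν x)
    (hsand_lo : (0 : Fin d → ℝ) ≤ (bQ - bstar) + (AQ - Astar).mulVec Q)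
    (hsand_hi : (bQ - bstar) + (AQ - Astar).mulVec Q ≤
      (bQ - bstar) + (AQ - Astar).mulVec (Q - Qstar)) :
    p ((bQ - bstar) + (AQ - Astar).mulVec Q) ≤
      2 * (CA / Cstar + Cb / Cstar ^ 2) * p (Q - Qstar) ^ 2 := by
  by_cases hnear : p (Q - Qstar) < Cstar
  · obtain ⟨rfl, rfl⟩ := hdich hnear
    have hξ : (bQ - bQ) + (AQ - AQ).mulVec Q = 0 :=
      le_antisymm (hsand_hi.trans_eq (by simp)) hsand_lo
    have hp_zero : p 0 = 0 := by simpa using hp_homog 0 0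
    rw [hξ, hp_zero]
    positivity
  · set t := p (Q - Qstar)
    have hA_diff : ν ((AQ - Astar).mulVec (Q - Qstar)) ≤ 2 * CA * t :=
      le_mul_of_map_ker_eq_zero p ν ν (AQ - Astar).mulVecLin.toAddMonoidHom _ hattain
        (fun e he ↦ by simp [hAQe e he, hAse e he]) hA_bound _
    have hquad := add_mul_le_div_add_div_mul_sq hCA hCb hCstar (not_lt.mp hnear)
    calc p ((bQ - bstar) + (AQ - Astar).mulVec Q)
        ≤ ν ((bQ - bstar) + (AQ - Astar).mulVec Q) := hple _
      _ ≤ ν ((bQ - bstar) + (AQ - Astar).mulVec (Q - Qstar)) := hν_mono _ _ hsand_lo hsand_hi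
      _ ≤ ν (bQ - bstar) + ν ((AQ - Astar).mulVec (Q - Qstar)) := hν_subadd _ _
      _ ≤ 2 * (CA / Cstar + Cb / Cstar ^ 2) * t ^ 2 := by linarith

/-- Quadratic bound on the nonlinear perturbation `ξ` of the stochastic fixed-point
iteration, obtained by coupling the seminorm `p` with its induced monotone norm `ν`. -/
theorem nonlinear_perturbation_quadratic_bound
    (d : ℕ) (hd : 0 < d)
    (p ν : (Fin d → ℝ) → ℝ)
    (hp_nonneg : ∀ x, 0 ≤ p x)
    (hp_homog : ∀ (c : ℝ) (x : Fin d → ℝ), p (c • x) = |c| * p x)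
    (hp_subadd : ∀ x y : Fin d → ℝ, p (x + y) ≤ p x + p y)
    (hν_nonneg : ∀ x, 0 ≤ ν x)
    (hν_homog : ∀ (c : ℝ) (x : Fin d → ℝ), ν (c • x) = |c| * ν x)
    (hν_subadd : ∀ x y : Fin d → ℝ, ν (x + y) ≤ ν x + ν y)
    (hν_def : ∀ x : Fin d → ℝ, ν x = 0 → x = 0)
    (hν_mono : ∀ x y : Fin d → ℝ, 0 ≤ x → x ≤ y → ν x ≤ ν y)
    (hple : ∀ x : Fin d → ℝ, p x ≤ ν x)
    (hattain : ∀ x : Fin d → ℝ, ∃ e : Fin d → ℝ, p e = 0 ∧ ν (x - e) = p x)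
    (hmin : ∀ (x e : Fin d → ℝ), p e = 0 → p x ≤ ν (x - e))
    (CA Cb Cstar : ℝ) (hCA : 0 ≤ CA) (hCb : 0 ≤ Cb) (hCstar : 0 < Cstar)
    (Q Qstar bQ bstar : Fin d → ℝ)
    (AQ Astar : Matrix (Fin d) (Fin d) ℝ)
    (hAQe : ∀ e : Fin d → ℝ, p e = 0 → AQ.mulVec e = e)
    (hAse : ∀ e : Fin d → ℝ, p e = 0 → Astar.mulVec e = e)
    (hdich : p (Q - Qstar) < Cstar → bQ = bstar ∧ AQ = Astar)
    (hb_bound : ν (bQ - bstar) ≤ 2 * Cb)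
    (hA_bound : ∀ x : Fin d → ℝ, ν ((AQ - Astar).mulVec x) ≤ 2 * CA * ν x)
    (hsand_lo : (0 : Fin d → ℝ) ≤ (bQ - bstar) + (AQ - Astar).mulVec Q)
    (hsand_hi : (bQ - bstar) + (AQ - Astar).mulVec Q ≤
      (bQ - bstar) + (AQ - Astar).mulVec (Q - Qstar)) :
    p ((bQ - bstar) + (AQ - Astar).mulVec Q) ≤
      2 * (CA / Cstar + Cb / Cstar ^ 2) * p (Q - Qstar) ^ 2 :=
  nonlinear_perturbation_quadratic_bound_general d p ν hp_homog hν_subadd hν_mono hple hattain CA Cb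
    Cstar hCA hCb hCstar Q Qstar bQ bstar AQ Astar hAQe hAse hdich hb_bound hA_bound hsand_lo
    hsand_hi
end
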